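/- Let γ = γ_{m₁,…,m_r} ∈ S_m. Let σ ∈ S_NC(m₁,…,m_r) and let π ∈ S_m satisfy π ≤ σ⁻¹γ and π ≲ γ. Then |σ| + |σ⁻¹γπ⁻¹| = |γπ⁻¹| + 2(#(π ∨ γ) − 1), and moreover |γπ⁻¹| + 2(#(γπ⁻¹) − #(σ ∨ γπ⁻¹)) ≤ |σ| + |σ⁻¹γπ⁻¹|, with equality if and only if for every block B of σ ∨ γπ⁻¹ the restriction σ|_B is non-crossing with respect to (γπ⁻¹)|_B. -/

import Mathlib

open Equiv

namespace ThirdOrderFree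

variable {α : Type*}

/-- The setoid whose classes are the cycles (orbits) of a permutation. -/
def sameCycleSetoid (σ : Perm α) : Setoid α :=
  ⟨σ.SameCycle,
    ⟨fun x => Equiv.Perm.SameCycle.refl σ x, fun h => h.symm, fun h h' => h.trans h'⟩⟩

/-- Number of cycles (orbits, including fixed points) of a permutation. -/
noncomputable def numCycles (σ : Perm α) : ℕ :=
  Nat.card (Quotient (sameCycleSetoid σ))

/-- The length `|σ| = n - #(σ)`. -/
noncomputable def len (σ : Perm α) : ℕ :=
  Nat.card α - numCycles σ

/-- Join of the cycle partitions of two permutations. -/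
def joinSetoid (π σ : Perm α) : Setoid α :=
  sameCycleSetoid π ⊔ sameCycleSetoid σ

/-- Number of blocks of `π ∨ σ`. -/
noncomputable def numBlocks (π σ : Perm α) : ℕ :=
  Nat.card (Quotient (joinSetoid π σ))

/-- `π ∨ σ` is the one-block partition. -/
def JoinTop (π σ : Perm α) : Prop :=
  ∀ x y : α, (joinSetoid π σ).r x y

/-- `π` is a non-crossing (annular) permutation with respect to `γ`. -/
def SNC (γ π : Perm α) : Prop :=
  JoinTop π γ ∧
    numCycles π + numCycles (π⁻¹ * γ) + numCycles γ = Nat.card α + 2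

/-- `τ` separates the points of `N`: no cycle of `τ` contains two distinct points of `N`. -/
def Separates (τ : Perm α) (N : Set α) : Prop :=
  ∀ x ∈ N, ∀ y ∈ N, τ.SameCycle x y → x = y

/-- The first-return map of `σ` on the set `{x | p x}`. -/
noncomputable def firstReturn (σ : Perm α) (p : α → Prop) (x : α) : α :=
  (σ ^ sInf {k : ℕ | 0 < k ∧ p ((σ ^ k) x)}) x

open Classical in
/-- The restriction of `σ` to `{x | p x}`: the unique permutation agreeing with the
first-return map (it exists whenever `α` is finite). -/
noncomputable def restrictPerm (σ : Perm α) (p : α → Prop) : Perm {x // p x} :=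
  if h : ∃ e : Perm {x // p x}, ∀ x : {x // p x}, (e x : α) = firstReturn σ p (x : α)
  then h.choose else 1

/-- `π ≤ σ` : each cycle of `π` is contained in a cycle of `σ` and on each cycle of
`σ` the restriction of `π` is a non-crossing permutation of that cycle. -/
def le' (π σ : Perm α) : Prop :=
  (∀ x y : α, π.SameCycle x y → σ.SameCycle x y) ∧
  ∀ x : α,
    numCycles (restrictPerm π (σ.SameCycle x)) +
      numCycles ((restrictPerm π (σ.SameCycle x))⁻¹ * restrictPerm σ (σ.SameCycle x)) =
      Nat.card {y // σ.SameCycle x y} + 1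

/-- `π ≲ σ` : on each block of `π ∨ σ`, `π` is annular non-crossing w.r.t. `σ`. -/
def ncRel (π σ : Perm α) : Prop :=
  ∀ x : α,
    SNC (restrictPerm σ ((joinSetoid π σ).r x)) (restrictPerm π ((joinSetoid π σ).r x))

/-- The permutation of `Σ i, Fin (n i)` rotating each block: the product of the
directed cycles `T i` of lengths `n i`. -/
def blockRotate {ι : Type*} (n : ι → ℕ) : Perm ((i : ι) × Fin (n i)) :=
  Equiv.sigmaCongrRight fun i => finRotate (n i)

/-- The first elements of the blocks. -/
def zeroSection {ι : Type*} (n : ι → ℕ) (hn : ∀ i, 0 < n i) :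
    ι ≃ {x : (i : ι) × Fin (n i) // x.2.val = 0} where
  toFun i := ⟨⟨i, ⟨0, hn i⟩⟩, rfl⟩
  invFun x := x.1.1
  left_inv i := rfl
  right_inv := fun x => by
    obtain ⟨⟨i, j⟩, hj⟩ := x
    exact Subtype.ext (congrArg (Sigma.mk i) (Fin.ext hj.symm))

/-- `π_{\vec n}` : merge the blocks `T i` along the cycles of `π`; within a block it
moves forward, and the last element of block `i` is sent to the first element of
block `π i`. -/
def mergePerm {ι : Type*} (n : ι → ℕ) (hn : ∀ i, 0 < n i) (π : Perm ι) :
    Perm ((i : ι) × Fin (n i)) :=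
  (π.extendDomain (zeroSection n hn)) * blockRotate n

/-!
The hypotheses are cycle-count identities: `σ ∈ S_NC` says `#σ + #(σ⁻¹γ) + #γ = m + 2`,
`π ≤ σ⁻¹γ` gives `#π + #(π⁻¹σ⁻¹γ) = m + #(σ⁻¹γ)` by summing over the cycles of `σ⁻¹γ`, and
`π ≲ γ` gives `#π + #(π⁻¹γ) + #γ = m + 2#(π ∨ γ)` by summing over the blocks of `π ∨ γ`.
As `#(ab) = #(ba)`, the first claim is linear arithmetic in these. The rest is Euler's inequality
`#a + #(a⁻¹b) + #b ≤ m + 2#(a ∨ b)` for `a = σ`, `b = γπ⁻¹`, with its equality case: it is the sum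
of the same inequalities on the blocks of `a ∨ b`, so it is an equality iff it is one on every
block, which is `σ ≲ γπ⁻¹`. Euler's inequality goes by induction on `|a⁻¹b|`: replacing `a` by
`a (x y)` with `y = a⁻¹b x` splits a cycle of `a⁻¹b`, while it changes `#a` by one and `#(a ∨ b)`
by at most one in the compensating direction, because the cycle partitions of `a` and `a (x y)`
coincide once the classes of `x` and `y` are merged.
-/

open Perm

section Cycles

lemma sameCycleSetoid_le_iff {a : Perm α} {t : Setoid α} :
    sameCycleSetoid a ≤ t ↔ ∀ u, t u (a u) := by
  refine ⟨fun h u => h ⟨1, rfl⟩, fun h => ?_⟩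
  rintro u _ ⟨k, rfl⟩
  induction k using Int.induction_on with
  | zero => exact t.refl' u
  | succ k ih =>
    rw [add_comm, zpow_one_add, Perm.mul_apply]
    exact t.trans' ih (h _)
  | pred k ih =>
    have h' := h ((a ^ (-(k : ℤ) - 1)) u)
    rw [← Perm.mul_apply, ← zpow_one_add, show 1 + (-(k : ℤ) - 1) = -k by ring] at h'
    exact t.trans' ih (t.symm' h')

lemma sameCycleSetoid_inv_mul_le {a b : Perm α} {s : Setoid α} (ha : sameCycleSetoid a ≤ s)
    (hb : sameCycleSetoid b ≤ s) : sameCycleSetoid (a⁻¹ * b) ≤ s :=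
  sameCycleSetoid_le_iff.2 fun u =>
    s.trans' (hb ⟨1, rfl⟩) (s.symm' (ha (⟨1, by simp⟩ : a.SameCycle (a⁻¹ (b u)) (b u))))

lemma sameCycleSetoid_le_joinSetoid_left (a b : Perm α) : sameCycleSetoid a ≤ joinSetoid a b :=
  le_sup_left

lemma sameCycleSetoid_le_joinSetoid_right (a b : Perm α) : sameCycleSetoid b ≤ joinSetoid a b :=
  le_sup_right

lemma numCycles_conj (c a : Perm α) : numCycles (c * a * c⁻¹) = numCycles a :=
  Nat.card_congr (Quotient.congr c⁻¹ fun _ _ => sameCycle_conj)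

lemma numCycles_mul_comm (a b : Perm α) : numCycles (a * b) = numCycles (b * a) := by
  rw [show b * a = a⁻¹ * (a * b) * a⁻¹⁻¹ by group, numCycles_conj]

lemma numCycles_one : numCycles (1 : Perm α) = Nat.card α :=
  (Nat.card_eq_of_bijective _ ⟨fun _ _ h => sameCycle_one.1 (Quotient.exact h),
    Quotient.mk_surjective⟩).symm

lemma numBlocks_self (a : Perm α) : numBlocks a a = numCycles a := by
  rw [numBlocks, joinSetoid, sup_idem, numCycles]

end Cycles

section Quotients

lemma card_quotient_le_of_le [Finite α] {s t : Setoid α} (h : s ≤ t) :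
    Nat.card (Quotient t) ≤ Nat.card (Quotient s) :=
  Nat.card_le_card_of_surjective (Quotient.lift (Quotient.mk t) fun _ _ h' => Quotient.sound (h h'))
    fun q => q.inductionOn fun u => ⟨⟦u⟧, rfl⟩

lemma rel_eq_mk_eq (s : Setoid α) (x : α) : s.r x = fun z => Quotient.mk s z = Quotient.mk s x :=
  funext fun _ => propext ⟨fun h => Quotient.sound (s.symm' h), fun h => s.symm' (Quotient.exact h)⟩

lemma card_eq_sum_card_block [Finite α] (s : Setoid α) [Fintype (Quotient s)] :
    Nat.card α = ∑ q : Quotient s, Nat.card {z // Quotient.mk s z = q} := by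
  rw [← Nat.card_congr (Equiv.sigmaFiberEquiv (Quotient.mk s)), Nat.card_sigma]

lemma card_quotient_eq_sum_one (s : Setoid α) [Fintype (Quotient s)] :
    Nat.card (Quotient s) = ∑ _q : Quotient s, 1 := by
  simp [Nat.card_eq_fintype_card]

end Quotients

section Merge

open Classical in
/-- `s` with the classes of `x` and `y` merged, as the kernel of relabelling the class of `y` by
that of `x`. -/
noncomputable def mergeSetoid (s : Setoid α) (x y : α) : Setoid α :=
  Setoid.ker fun u => if s u y then Quotient.mk s x else Quotient.mk s u

lemma le_mergeSetoid (s : Setoid α) (x y : α) : s ≤ mergeSetoid s x y := by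
  classical
  intro u v h
  have hy : s u y ↔ s v y := ⟨s.trans' (s.symm' h), s.trans' h⟩
  change ite _ _ _ = ite _ _ _
  by_cases hu : s u y
  · rw [if_pos hu, if_pos (hy.1 hu)]
  · rw [if_neg hu, if_neg (mt hy.2 hu), Quotient.sound h]

lemma mergeSetoid_rel (s : Setoid α) (x y : α) : mergeSetoid s x y x y := by
  classical
  change ite _ _ _ = ite _ _ _
  rw [if_pos (s.refl' y), ite_self]

variable {s t : Setoid α} {x y : α}

lemma mergeSetoid_le (hst : s ≤ t) (hxy : t x y) : mergeSetoid s x y ≤ t := by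
  classical
  intro u v h
  change ite _ _ _ = ite _ _ _ at h
  split_ifs at h with hu hv hv
  · exact t.trans' (hst hu) (t.symm' (hst hv))
  · exact t.trans' (hst hu) (t.trans' (t.symm' hxy) (hst (Quotient.exact h)))
  · exact t.trans' (hst (Quotient.exact h)) (t.trans' hxy (t.symm' (hst hv)))
  · exact hst (Quotient.exact h)

lemma mergeSetoid_eq_self (h : s x y) : mergeSetoid s x y = s :=
  le_antisymm (mergeSetoid_le le_rfl h) (le_mergeSetoid s x y)

lemma mergeSetoid_mono (h : s ≤ t) : mergeSetoid s x y ≤ mergeSetoid t x y :=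
  mergeSetoid_le (h.trans (le_mergeSetoid t x y)) (mergeSetoid_rel t x y)

lemma card_quotient_mergeSetoid_add_one [Finite α] (h : ¬ s x y) :
    Nat.card (Quotient (mergeSetoid s x y)) + 1 = Nat.card (Quotient s) := by
  classical
  have hrange : Set.range (fun u => if s u y then Quotient.mk s x else Quotient.mk s u) =
      Set.univ \ {⟦y⟧} := by
    ext q
    refine ⟨?_, fun hq => q.inductionOn (fun u hu => ⟨u, ?_⟩) hq⟩
    · rintro ⟨u, rfl⟩
      by_cases hu : s u y
      · simpa [hu] using fun he => h (Quotient.exact he)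
      · simpa [hu] using fun he => hu (Quotient.exact he)
    · have hu : ¬ s u y := fun he => hu.2 (Quotient.sound he)
      simp [hu]
  rw [mergeSetoid, Nat.card_congr (Setoid.quotientKerEquivRange _), Nat.card_coe_set_eq,
    hrange, Set.ncard_sdiff_singleton_add_one (Set.mem_univ _) (Set.toFinite _), Set.ncard_univ]

lemma card_quotient_le_card_quotient_mergeSetoid_add_one [Finite α] :
    Nat.card (Quotient s) ≤ Nat.card (Quotient (mergeSetoid s x y)) + 1 := by
  by_cases h : s x y
  · rw [mergeSetoid_eq_self h]
    omega
  · exact (card_quotient_mergeSetoid_add_one h).ge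

end Merge

section Swap

variable [DecidableEq α]

lemma sameCycleSetoid_mul_swap_le (a : Perm α) (x y : α) :
    sameCycleSetoid (a * swap x y) ≤ mergeSetoid (sameCycleSetoid a) x y := by
  set M := mergeSetoid (sameCycleSetoid a) x y
  have hxy : M x y := mergeSetoid_rel _ x y
  have ha : ∀ u, M u (a u) := fun u => le_mergeSetoid _ x y ⟨1, rfl⟩
  refine sameCycleSetoid_le_iff.2 fun u => ?_
  rw [Perm.mul_apply]
  rcases eq_or_ne u x with rfl | hux
  · rw [swap_apply_left]
    exact M.trans' hxy (ha y)
  rcases eq_or_ne u y with rfl | huy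
  · rw [swap_apply_right]
    exact M.trans' (M.symm' hxy) (ha x)
  · rw [swap_apply_of_ne_of_ne hux huy]
    exact ha u

lemma mergeSetoid_sameCycleSetoid_mul_swap (a : Perm α) (x y : α) :
    mergeSetoid (sameCycleSetoid (a * swap x y)) x y = mergeSetoid (sameCycleSetoid a) x y := by
  refine le_antisymm (mergeSetoid_le (sameCycleSetoid_mul_swap_le a x y) (mergeSetoid_rel _ x y))
    (mergeSetoid_le ?_ (mergeSetoid_rel _ x y))
  simpa only [mul_swap_mul_self] using sameCycleSetoid_mul_swap_le (a * swap x y) x y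

lemma sameCycle_mul_swap_of_not_sameCycle [Finite α] {a : Perm α} {x y : α}
    (h : ¬ a.SameCycle x y) : (a * swap x y).SameCycle x y := by
  have hx : ∀ k : ℕ, (a ^ k) y ≠ x := fun k hk => h ⟨-k, by simp [← hk]⟩
  -- the orbit `a y, a² y, …` of `y` under `a` is walked through by `a * swap x y` starting at `x`
  have hwalk : ∀ k : ℕ, (a * swap x y).SameCycle x ((a ^ (k + 1)) y) := by
    have h₀ : (a * swap x y).SameCycle x (a y) := ⟨1, by simp⟩
    intro k
    induction k with
    | zero => simpa using h₀
    | succ k ih =>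
      by_cases hy : (a ^ (k + 1)) y = y
      · rwa [pow_succ', Perm.mul_apply, hy]
      · have hstep : (a * swap x y) ((a ^ (k + 1)) y) = (a ^ (k + 2)) y := by
          rw [Perm.mul_apply, swap_apply_of_ne_of_ne (hx _) hy, ← Perm.mul_apply, ← pow_succ']
        rw [← hstep]
        exact ih.trans ⟨1, rfl⟩
  simpa [Nat.sub_add_cancel (orderOf_pos a), pow_orderOf_eq_one] using hwalk (orderOf a - 1)

lemma numCycles_swap_mul_self [Finite α] {g : Perm α} {x : α} (hx : g x ≠ x) :
    numCycles (swap x (g x) * g) = numCycles g + 1 := by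
  set y := g x
  have hfix : (g * swap x y) y = y := by rw [Perm.mul_apply, swap_apply_right]
  have hsplit : ¬ (g * swap x y).SameCycle x y := fun h => hx (h.eq_of_right hfix).symm
  have hmerge := card_quotient_mergeSetoid_add_one (s := sameCycleSetoid (g * swap x y)) hsplit
  rw [mergeSetoid_sameCycleSetoid_mul_swap,
    mergeSetoid_eq_self (show g.SameCycle x y from ⟨1, rfl⟩)] at hmerge
  rw [numCycles_mul_comm, numCycles, numCycles, ← hmerge]

end Swap

section Euler

variable [Finite α]

lemma numCycles_le_card (a : Perm α) : numCycles a ≤ Nat.card α :=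
  Nat.card_le_card_of_surjective _ Quotient.mk_surjective

lemma numCycles_add_two_mul_numBlocks_mul_swap_le [DecidableEq α] (a b : Perm α) (x y : α) :
    numCycles a + 2 * numBlocks (a * swap x y) b ≤
      numCycles (a * swap x y) + 1 + 2 * numBlocks a b := by
  set a' := a * swap x y
  have hmerge := mergeSetoid_sameCycleSetoid_mul_swap a x y
  by_cases h : a'.SameCycle x y
  · have hle : sameCycleSetoid a ≤ sameCycleSetoid a' := by
      rw [← mergeSetoid_eq_self (s := sameCycleSetoid a') h, hmerge]
      exact le_mergeSetoid _ x y
    have hcyc : numCycles a ≤ numCycles a' + 1 := by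
      have := card_quotient_le_card_quotient_mergeSetoid_add_one
        (s := sameCycleSetoid a) (x := x) (y := y)
      rwa [← hmerge, mergeSetoid_eq_self h] at this
    have hblk : numBlocks a' b ≤ numBlocks a b :=
      card_quotient_le_of_le (sup_le_sup_right hle _)
    omega
  · have ha : a.SameCycle x y := by
      simpa only [a', mul_swap_mul_self] using sameCycle_mul_swap_of_not_sameCycle h
    have hcyc : numCycles a + 1 = numCycles a' := by
      have := card_quotient_mergeSetoid_add_one (s := sameCycleSetoid a') h
      rwa [hmerge, mergeSetoid_eq_self ha] at this
    have hjoin : joinSetoid a b ≤ mergeSetoid (joinSetoid a' b) x y := by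
      refine sup_le ?_ (le_sup_right.trans (le_mergeSetoid _ x y))
      rw [← mergeSetoid_eq_self (s := sameCycleSetoid a) ha, ← hmerge]
      exact mergeSetoid_mono le_sup_left
    have hblk : numBlocks a' b ≤ numBlocks a b + 1 :=
      card_quotient_le_card_quotient_mergeSetoid_add_one.trans
        (Nat.add_le_add_right (card_quotient_le_of_le hjoin) 1)
    omega

theorem numCycles_add_numCycles_inv_mul_add_numCycles_le (a b : Perm α) :
    numCycles a + numCycles (a⁻¹ * b) + numCycles b ≤ Nat.card α + 2 * numBlocks a b := by
  classical
  induction hk : Nat.card α - numCycles (a⁻¹ * b) using Nat.strong_induction_on generalizing a with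
  | _ k ih =>
  obtain rfl | hab := eq_or_ne a b
  · rw [inv_mul_cancel, numCycles_one, numBlocks_self]
    omega
  obtain ⟨x, hx⟩ : ∃ x, (a⁻¹ * b) x ≠ x := by
    by_contra! h
    exact hab (inv_mul_eq_one.1 (Equiv.ext h))
  set g := a⁻¹ * b
  -- `a * swap x (g x)` is closer to `b`: the swap splits the cycle of `g` through `x`
  have hcount : numCycles ((a * swap x (g x))⁻¹ * b) = numCycles g + 1 := by
    rw [mul_inv_rev, swap_inv, mul_assoc, numCycles_swap_mul_self hx]
  have hle := numCycles_le_card ((a * swap x (g x))⁻¹ * b)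
  have ih' := ih _ (by omega) (a * swap x (g x)) rfl
  have hexchange := numCycles_add_two_mul_numBlocks_mul_swap_le a b x (g x)
  omega

end Euler

section Blocks

variable {s : Setoid α}

lemma mk_apply_eq_mk {a : Perm α} (h : sameCycleSetoid a ≤ s) (z : α) :
    Quotient.mk s (a z) = Quotient.mk s z :=
  Quotient.sound (s.symm' (h ⟨1, rfl⟩))

def blockPerm (a : Perm α) (h : sameCycleSetoid a ≤ s) (q : Quotient s) :
    Perm {z // Quotient.mk s z = q} :=
  a.subtypePerm fun z => by rw [mk_apply_eq_mk h]

lemma blockPerm_inv_mul {a b : Perm α} (ha : sameCycleSetoid a ≤ s) (hb : sameCycleSetoid b ≤ s)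
    (q : Quotient s) :
    (blockPerm a ha q)⁻¹ * blockPerm b hb q =
      blockPerm (a⁻¹ * b) (sameCycleSetoid_inv_mul_le ha hb) q :=
  rfl

lemma restrictPerm_eq {a : Perm α} {p : α → Prop} (hp : ∀ z, p (a z) ↔ p z) :
    restrictPerm a p = a.subtypePerm hp := by
  have hret : ∀ z : {z // p z}, firstReturn a p z = a z := by
    rintro ⟨z, hz⟩
    have h1 : 1 ∈ {k : ℕ | 0 < k ∧ p ((a ^ k) z)} := ⟨one_pos, by rwa [pow_one, hp]⟩
    have h2 : sInf {k : ℕ | 0 < k ∧ p ((a ^ k) z)} = 1 :=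
      le_antisymm (Nat.sInf_le h1) (Nat.sInf_mem ⟨1, h1⟩).1
    rw [firstReturn, h2, pow_one]
  have hex : ∃ e : Perm {z // p z}, ∀ z, (e z : α) = firstReturn a p z :=
    ⟨a.subtypePerm hp, fun z => (hret z).symm⟩
  rw [restrictPerm, dif_pos hex]
  ext z
  rw [hex.choose_spec, hret]
  rfl

lemma restrictPerm_eq_blockPerm {a : Perm α} (h : sameCycleSetoid a ≤ s) (q : Quotient s) :
    restrictPerm a (fun z => Quotient.mk s z = q) = blockPerm a h q :=
  restrictPerm_eq _

lemma sameCycle_eq_mk_eq (g : Perm α) (x : α) :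
    g.SameCycle x = fun z => Quotient.mk (sameCycleSetoid g) z = Quotient.mk _ x :=
  rel_eq_mk_eq (sameCycleSetoid g) x

lemma numCycles_eq_sum_numCycles_blockPerm [Finite α] [Fintype (Quotient s)] {a : Perm α}
    (h : sameCycleSetoid a ≤ s) :
    numCycles a = ∑ q, numCycles (blockPerm a h q) := by
  rw [numCycles, ← Nat.card_congr (Setoid.sigmaQuotientEquivOfLe h), Nat.card_sigma]
  refine Finset.sum_congr rfl fun q _ => ?_
  have hs : sameCycleSetoid (blockPerm a h q) = (sameCycleSetoid a).comap Subtype.val :=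
    Setoid.ext fun _ _ => sameCycle_subtypePerm
  rw [numCycles, hs]
  rfl

end Blocks

section JoinBlocks

lemma numBlocks_eq_one {β : Type*} [Nonempty β] {f g : Perm β} (h : JoinTop f g) :
    numBlocks f g = 1 :=
  Nat.card_eq_one_iff_unique.2
    ⟨⟨fun p q => Quotient.inductionOn₂ p q fun u v => Quotient.sound (h u v)⟩,
      ⟨⟦Classical.arbitrary β⟧⟩⟩

variable (a b : Perm α)

lemma joinTop_blockPerm (q : Quotient (joinSetoid a b)) :
    JoinTop (blockPerm a (sameCycleSetoid_le_joinSetoid_left a b) q)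
      (blockPerm b (sameCycleSetoid_le_joinSetoid_right a b) q) := by
  classical
  set J' := joinSetoid (blockPerm a (sameCycleSetoid_le_joinSetoid_left a b) q)
    (blockPerm b (sameCycleSetoid_le_joinSetoid_right a b) q)
  -- retract `α` onto the block, sending everything outside it to a single point
  let r : α → {z // Quotient.mk _ z = q} := fun u =>
    if hu : Quotient.mk _ u = q then ⟨u, hu⟩ else ⟨q.out, q.out_eq⟩
  have hr : ∀ (c : Perm α) (hc : sameCycleSetoid c ≤ joinSetoid a b),
      sameCycleSetoid (blockPerm c hc q) ≤ J' → sameCycleSetoid c ≤ J'.comap r := by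
    refine fun c hc hJ' => sameCycleSetoid_le_iff.2 fun u => ?_
    by_cases hu : Quotient.mk _ u = q
    · have hcu : Quotient.mk _ (c u) = q := (mk_apply_eq_mk hc u).trans hu
      change J' (r u) (r (c u))
      simp only [r, dif_pos hu, dif_pos hcu]
      exact hJ' ⟨1, rfl⟩
    · have hcu : Quotient.mk _ (c u) ≠ q := by rwa [mk_apply_eq_mk hc]
      change J' (r u) (r (c u))
      simp only [r, dif_neg hu, dif_neg hcu]
      exact J'.refl' _
  have hle : joinSetoid a b ≤ J'.comap r :=
    sup_le (hr a _ (sameCycleSetoid_le_joinSetoid_left _ _))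
      (hr b _ (sameCycleSetoid_le_joinSetoid_right _ _))
  rintro ⟨u, hu⟩ ⟨v, hv⟩
  simpa [r, Setoid.comap_rel, hu, hv] using hle (Quotient.exact (hu.trans hv.symm))

noncomputable def blockCycleSum (q : Quotient (joinSetoid a b)) : ℕ :=
  numCycles (blockPerm a (sameCycleSetoid_le_joinSetoid_left a b) q) +
    numCycles (blockPerm (a⁻¹ * b) (sameCycleSetoid_inv_mul_le
      (sameCycleSetoid_le_joinSetoid_left a b) (sameCycleSetoid_le_joinSetoid_right a b)) q) +
    numCycles (blockPerm b (sameCycleSetoid_le_joinSetoid_right a b) q)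

lemma sNC_restrictPerm_iff (x : α) :
    SNC (restrictPerm b ((joinSetoid a b).r x)) (restrictPerm a ((joinSetoid a b).r x)) ↔
      blockCycleSum a b ⟦x⟧ = Nat.card {z // Quotient.mk (joinSetoid a b) z = ⟦x⟧} + 2 := by
  rw [rel_eq_mk_eq, restrictPerm_eq_blockPerm (sameCycleSetoid_le_joinSetoid_left a b),
    restrictPerm_eq_blockPerm (sameCycleSetoid_le_joinSetoid_right a b), SNC, blockPerm_inv_mul]
  exact and_iff_right (joinTop_blockPerm a b _)

variable [Finite α]

lemma blockCycleSum_le (q : Quotient (joinSetoid a b)) :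
    blockCycleSum a b q ≤ Nat.card {z // Quotient.mk _ z = q} + 2 := by
  have : Nonempty {z // Quotient.mk _ z = q} := ⟨⟨q.out, q.out_eq⟩⟩
  have h := numCycles_add_numCycles_inv_mul_add_numCycles_le
    (blockPerm a (sameCycleSetoid_le_joinSetoid_left a b) q)
    (blockPerm b (sameCycleSetoid_le_joinSetoid_right a b) q)
  rwa [numBlocks_eq_one (joinTop_blockPerm a b q), blockPerm_inv_mul] at h

lemma numCycles_add_eq_sum_blockCycleSum [Fintype (Quotient (joinSetoid a b))] :
    numCycles a + numCycles (a⁻¹ * b) + numCycles b = ∑ q, blockCycleSum a b q := by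
  rw [numCycles_eq_sum_numCycles_blockPerm (sameCycleSetoid_le_joinSetoid_left a b),
    numCycles_eq_sum_numCycles_blockPerm (sameCycleSetoid_inv_mul_le
      (sameCycleSetoid_le_joinSetoid_left a b) (sameCycleSetoid_le_joinSetoid_right a b)),
    numCycles_eq_sum_numCycles_blockPerm (sameCycleSetoid_le_joinSetoid_right a b),
    ← Finset.sum_add_distrib, ← Finset.sum_add_distrib]
  rfl

theorem numCycles_add_eq_iff_ncRel :
    numCycles a + numCycles (a⁻¹ * b) + numCycles b = Nat.card α + 2 * numBlocks a b ↔
      ncRel a b := by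
  classical
  let _ : Fintype (Quotient (joinSetoid a b)) := Fintype.ofFinite _
  have hrhs : Nat.card α + 2 * numBlocks a b =
      ∑ q, (Nat.card {z // Quotient.mk (joinSetoid a b) z = q} + 2) := by
    rw [card_eq_sum_card_block (joinSetoid a b), Finset.sum_add_distrib, numBlocks,
      card_quotient_eq_sum_one, Finset.mul_sum, mul_one]
  rw [numCycles_add_eq_sum_blockCycleSum, hrhs,
    Finset.sum_eq_sum_iff_of_le fun q _ => blockCycleSum_le a b q]
  simp only [Finset.mem_univ, true_implies]
  exact ⟨fun h x => (sNC_restrictPerm_iff a b x).2 (h _),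
    fun h q => q.inductionOn fun x => (sNC_restrictPerm_iff a b x).1 (h x)⟩

end JoinBlocks

section Sums

variable [Finite α]

lemma numBlocks_le_numCycles_right (a b : Perm α) : numBlocks a b ≤ numCycles b :=
  card_quotient_le_of_le (sameCycleSetoid_le_joinSetoid_right a b)

lemma numBlocks_pos [Nonempty α] (a b : Perm α) : 0 < numBlocks a b :=
  have : Nonempty (Quotient (joinSetoid a b)) := ⟨⟦Classical.arbitrary α⟧⟩
  Nat.card_pos

theorem numCycles_add_numCycles_inv_mul_of_le' {π g : Perm α} (h : le' π g) :
    numCycles π + numCycles (π⁻¹ * g) = Nat.card α + numCycles g := by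
  classical
  let _ : Fintype (Quotient (sameCycleSetoid g)) := Fintype.ofFinite _
  have hπ : sameCycleSetoid π ≤ sameCycleSetoid g := fun x y hxy => h.1 x y hxy
  have hπg := sameCycleSetoid_inv_mul_le hπ le_rfl
  have hblock : ∀ q, numCycles (blockPerm π hπ q) + numCycles (blockPerm (π⁻¹ * g) hπg q) =
      Nat.card {z // Quotient.mk _ z = q} + 1 := by
    refine fun q => q.inductionOn fun x => ?_
    have hx := h.2 x
    rwa [sameCycle_eq_mk_eq, restrictPerm_eq_blockPerm hπ, restrictPerm_eq_blockPerm le_rfl,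
      blockPerm_inv_mul] at hx
  rw [numCycles_eq_sum_numCycles_blockPerm hπ, numCycles_eq_sum_numCycles_blockPerm hπg,
    ← Finset.sum_add_distrib, Finset.sum_congr rfl fun q _ => hblock q, Finset.sum_add_distrib,
    ← card_eq_sum_card_block, numCycles, card_quotient_eq_sum_one]

end Sums

theorem stmt6_general {r : ℕ} (m : Fin r → ℕ)
    (γ : Equiv.Perm ((i : Fin r) × Fin (m i)))
    (σ π : Equiv.Perm ((i : Fin r) × Fin (m i)))
    (hσ : SNC γ σ) (hπ1 : le' π (σ⁻¹ * γ)) (hπ2 : ncRel π γ) :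
    len σ + len (σ⁻¹ * (γ * π⁻¹)) = len (γ * π⁻¹) + 2 * (numBlocks π γ - 1) ∧
    len (γ * π⁻¹) + 2 * (numCycles (γ * π⁻¹) - numBlocks σ (γ * π⁻¹)) ≤
      len σ + len (σ⁻¹ * (γ * π⁻¹)) ∧
    (len (γ * π⁻¹) + 2 * (numCycles (γ * π⁻¹) - numBlocks σ (γ * π⁻¹)) =
        len σ + len (σ⁻¹ * (γ * π⁻¹)) ↔ ncRel σ (γ * π⁻¹)) := by
  have hσγ := hσ.2
  have hπσγ := numCycles_add_numCycles_inv_mul_of_le' hπ1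
  have hπγ := (numCycles_add_eq_iff_ncRel π γ).2 hπ2
  have hσγπ := numCycles_add_numCycles_inv_mul_add_numCycles_le σ (γ * π⁻¹)
  have hrot₁ : numCycles (σ⁻¹ * (γ * π⁻¹)) = numCycles (π⁻¹ * (σ⁻¹ * γ)) := by
    rw [← mul_assoc, numCycles_mul_comm]
  have hrot₂ : numCycles (γ * π⁻¹) = numCycles (π⁻¹ * γ) := numCycles_mul_comm γ π⁻¹
  have := numCycles_le_card σ
  have := numCycles_le_card (σ⁻¹ * (γ * π⁻¹))
  have := numCycles_le_card (γ * π⁻¹)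
  have := numCycles_le_card γ
  have := numCycles_le_card (σ⁻¹ * γ)
  have := numBlocks_le_numCycles_right σ (γ * π⁻¹)
  have : Nonempty ((i : Fin r) × Fin (m i)) := (Nat.card_pos_iff.1 (by omega)).1
  have := numBlocks_pos π γ
  refine ⟨by simp only [len]; omega, by simp only [len]; omega, ?_⟩
  rw [← numCycles_add_eq_iff_ncRel]
  simp only [len]
  omega

/-- for `σ ∈ S_NC(m₁,…,m_r)`, `π ≤ σ⁻¹γ` and `π ≲ γ`:
`|σ| + |σ⁻¹γπ⁻¹| = |γπ⁻¹| + 2(#(π ∨ γ) − 1)`, and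
`|γπ⁻¹| + 2(#(γπ⁻¹) − #(σ ∨ γπ⁻¹)) ≤ |σ| + |σ⁻¹γπ⁻¹|`, with equality iff
`σ` is non-crossing on each block of `σ ∨ γπ⁻¹` with respect to `γπ⁻¹`. -/
theorem stmt6 {r : ℕ} (m : Fin r → ℕ)
    (γ : Equiv.Perm ((i : Fin r) × Fin (m i))) (hγ : γ = blockRotate m)
    (σ π : Equiv.Perm ((i : Fin r) × Fin (m i)))
    (hσ : SNC γ σ) (hπ1 : le' π (σ⁻¹ * γ)) (hπ2 : ncRel π γ) :
    len σ + len (σ⁻¹ * (γ * π⁻¹)) = len (γ * π⁻¹) + 2 * (numBlocks π γ - 1) ∧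
    len (γ * π⁻¹) + 2 * (numCycles (γ * π⁻¹) - numBlocks σ (γ * π⁻¹)) ≤
      len σ + len (σ⁻¹ * (γ * π⁻¹)) ∧
    (len (γ * π⁻¹) + 2 * (numCycles (γ * π⁻¹) - numBlocks σ (γ * π⁻¹)) =
        len σ + len (σ⁻¹ * (γ * π⁻¹)) ↔ ncRel σ (γ * π⁻¹)) :=
  stmt6_general m γ σ π hσ hπ1 hπ2

end ThirdOrderFree
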